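/- arXiv:2301.04948 — 6 statements merged into one kernel-verified Lean document; each statement's English description precedes it below -/
import Mathlib

section
/- Let d ≥ 2. On (ℂ^d ⊗ ℂ^d) ⊗ (ℂ^d ⊗ ℂ^d), define J = (1/(d²−1)) ( 1 ⊗ ((1/d²) 1 − (1/d) S) + T ⊗ (S − (1/d) 1) ) and W = (2T − 1) ⊗ S. Then (W J)² = J². (Consequently, since W is unitary and Hermitian, W J is a Hermitian square root of J², i.e. |J| = W J gives a polar decomposition of J.) -/
open Matrix Kronecker

/-- The `d²×d²` swap matrix `S`, with entries `S_{(i,j),(k,l)} = δ_{il} δ_{jk}`. -/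
def swapMatrix (d : ℕ) : Matrix (Fin d × Fin d) (Fin d × Fin d) ℂ :=
  Matrix.of fun p q => if p.1 = q.2 ∧ p.2 = q.1 then 1 else 0

/-- The diagonal part `T = Δ(S)` of the swap matrix, with entries
`T_{(i,j),(k,l)} = δ_{ik} δ_{jl} δ_{ij}`. -/
def diagSwapMatrix (d : ℕ) : Matrix (Fin d × Fin d) (Fin d × Fin d) ℂ :=
  Matrix.of fun p q => if p.1 = q.1 ∧ p.2 = q.2 ∧ p.1 = p.2 then 1 else 0

/-- With `J = (1/(d²−1)) (1 ⊗ ((1/d²)1 − (1/d)S) + T ⊗ (S − (1/d)1))` and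
`W = (2T − 1) ⊗ S`, we have `(W J)² = J²`. -/
theorem WJ_sq_eq_J_sq (d : ℕ) (hd : 2 ≤ d)
    (S : Matrix (Fin d × Fin d) (Fin d × Fin d) ℂ) (hS : S = swapMatrix d)
    (T : Matrix (Fin d × Fin d) (Fin d × Fin d) ℂ) (hT : T = diagSwapMatrix d)
    (J W : Matrix ((Fin d × Fin d) × (Fin d × Fin d)) ((Fin d × Fin d) × (Fin d × Fin d)) ℂ)
    (hJ : J = (1 / ((d : ℂ) ^ 2 - 1)) •
      ((1 : Matrix (Fin d × Fin d) (Fin d × Fin d) ℂ) ⊗ₖ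
          ((1 / (d : ℂ) ^ 2) • (1 : Matrix (Fin d × Fin d) (Fin d × Fin d) ℂ) -
            (1 / (d : ℂ)) • S) +
        T ⊗ₖ (S - (1 / (d : ℂ)) • (1 : Matrix (Fin d × Fin d) (Fin d × Fin d) ℂ))))
    (hW : W = ((2 : ℂ) • T - 1) ⊗ₖ S) :
    (W * J) ^ 2 = J ^ 2 := by
  have hSS : S * S = 1 := by
    subst hS; ext ⟨i,j⟩ ⟨k,l⟩
    simp [mul_apply, swapMatrix, Fintype.sum_prod_type, ite_and, one_apply, Prod.ext_iff]
  have hTT : T * T = T := by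
    subst hT; ext ⟨i,j⟩ ⟨k,l⟩
    simp [mul_apply, diagSwapMatrix, Fintype.sum_prod_type, ite_and]
    aesop
  have hST : S * T = T := by
    subst hS hT; ext ⟨i,j⟩ ⟨k,l⟩
    simp [mul_apply, swapMatrix, diagSwapMatrix, Fintype.sum_prod_type, ite_and]
    aesop
  have hTS : T * S = T := by
    subst hS hT; ext ⟨i,j⟩ ⟨k,l⟩
    simp [mul_apply, swapMatrix, diagSwapMatrix, Fintype.sum_prod_type, ite_and]
    aesop
  -- key: W * J * W = J
  have hWW1 : (((2:ℂ) • T - 1) * 1) * ((2:ℂ) • T - 1) = 1 := by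
    simp only [mul_one, sub_mul, mul_sub, smul_mul_assoc, mul_smul_comm, hTT, one_mul, mul_one,
      smul_smul]
    module
  have hWTW : (((2:ℂ) • T - 1) * T) * ((2:ℂ) • T - 1) = T := by
    simp only [sub_mul, mul_sub, smul_mul_assoc, mul_smul_comm, hTT, one_mul, mul_one, smul_smul]
    module
  have hSAS : S * ((1 / (d : ℂ) ^ 2) • (1 : Matrix (Fin d × Fin d) (Fin d × Fin d) ℂ) -
      (1 / (d : ℂ)) • S) * S = (1 / (d : ℂ) ^ 2) • 1 - (1 / (d : ℂ)) • S := by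
    simp only [mul_sub, sub_mul, mul_smul_comm, smul_mul_assoc, hSS, one_mul, mul_one]
  have hSBS : S * (S - (1 / (d : ℂ)) • (1 : Matrix (Fin d × Fin d) (Fin d × Fin d) ℂ)) * S
      = S - (1 / (d : ℂ)) • 1 := by
    simp only [mul_sub, sub_mul, mul_smul_comm, smul_mul_assoc, hSS, one_mul, mul_one]
  have key : W * J * W = J := by
    rw [hJ, hW]
    rw [mul_smul_comm, smul_mul_assoc, mul_add, add_mul, ← Matrix.mul_kronecker_mul,
      ← Matrix.mul_kronecker_mul, ← Matrix.mul_kronecker_mul, ← Matrix.mul_kronecker_mul,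
      hWW1, hWTW, hSAS, hSBS]
  have hWsq : W * W = 1 := by
    rw [hW, ← Matrix.mul_kronecker_mul, hSS]
    have : ((2:ℂ) • T - 1) * ((2:ℂ) • T - 1) = 1 := by
      simpa using hWW1
    rw [this, Matrix.one_kronecker_one]
  rw [sq, sq, ← mul_assoc, key]
end

section
/- Let d ≥ 2. On (ℂ^d ⊗ ℂ^d) ⊗ (ℂ^d ⊗ ℂ^d), define J = (1/(d²−1)) ( 1 ⊗ ((1/d²) 1 − (1/d) S) + T ⊗ (S − (1/d) 1) ) and W = (2T − 1) ⊗ S. Then the partial trace of W J over the first (output) d²-dimensional tensor factor equals (2/(d+1)) ( 1 − (1/d) S ), a d²×d² matrix. -/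
open Matrix Kronecker

/-- The partial trace over the first tensor factor:
`(Tr₁ M)_{a,b} = Σ_c M_{(c,a),(c,b)}`. -/
noncomputable def ptrFirst {n m : Type*} [Fintype n] (M : Matrix (n × m) (n × m) ℂ) : Matrix m m ℂ :=
  Matrix.of fun a b => ∑ c : n, M (c, a) (c, b)

lemma ptrFirst_kron {n m : Type*} [Fintype n] [Fintype m] (A : Matrix n n ℂ) (B : Matrix m m ℂ) :
    ptrFirst (A ⊗ₖ B) = A.trace • B := by
  ext a b
  simp [ptrFirst, Matrix.trace, Matrix.diag, Finset.sum_mul]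

lemma ptrFirst_add {n m : Type*} [Fintype n] [Fintype m] (M N : Matrix (n × m) (n × m) ℂ) :
    ptrFirst (M + N) = ptrFirst M + ptrFirst N := by
  ext a b; simp [ptrFirst, Finset.sum_add_distrib]

lemma ptrFirst_smul {n m : Type*} [Fintype n] [Fintype m] (c : ℂ) (M : Matrix (n × m) (n × m) ℂ) :
    ptrFirst (c • M) = c • ptrFirst M := by
  ext a b; simp [ptrFirst, Finset.mul_sum]

lemma S_mul_S (d : ℕ) : swapMatrix d * swapMatrix d = 1 := by
  ext ⟨a1, a2⟩ ⟨b1, b2⟩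
  simp [swapMatrix, Matrix.mul_apply, Fintype.sum_prod_type, Matrix.one_apply,
    Prod.ext_iff, ite_and, and_comm]

lemma T_mul_T (d : ℕ) : diagSwapMatrix d * diagSwapMatrix d = diagSwapMatrix d := by
  ext ⟨a1, a2⟩ ⟨b1, b2⟩
  simp [diagSwapMatrix, Matrix.mul_apply, Fintype.sum_prod_type, ite_and]
  aesop

lemma trace_T (d : ℕ) : (diagSwapMatrix d).trace = (d : ℂ) := by
  have hset : (Finset.filter (fun x : Fin d × Fin d => x.1 = x.2) Finset.univ)
      = Finset.univ.image (fun i : Fin d => (i, i)) := by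
    ext ⟨i, j⟩
    simp [eq_comm, Prod.ext_iff]
  have hinj : Function.Injective (fun i : Fin d => (i, i)) := fun a b h => congrArg Prod.fst h
  simp [diagSwapMatrix, Matrix.trace, Matrix.diag, hset, Finset.card_image_of_injective _ hinj]

/-- With `J = (1/(d²−1)) (1 ⊗ ((1/d²)1 − (1/d)S) + T ⊗ (S − (1/d)1))` and
`W = (2T − 1) ⊗ S`, the partial trace of `W J` over the first (output) factor is
`Tr₁(W J) = (2/(d+1)) (1 − (1/d) S)`. -/
theorem ptrFirst_WJ (d : ℕ) (hd : 2 ≤ d)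
    (S : Matrix (Fin d × Fin d) (Fin d × Fin d) ℂ) (hS : S = swapMatrix d)
    (T : Matrix (Fin d × Fin d) (Fin d × Fin d) ℂ) (hT : T = diagSwapMatrix d)
    (J W : Matrix ((Fin d × Fin d) × (Fin d × Fin d)) ((Fin d × Fin d) × (Fin d × Fin d)) ℂ)
    (hJ : J = (1 / ((d : ℂ) ^ 2 - 1)) •
      ((1 : Matrix (Fin d × Fin d) (Fin d × Fin d) ℂ) ⊗ₖ
          ((1 / (d : ℂ) ^ 2) • (1 : Matrix (Fin d × Fin d) (Fin d × Fin d) ℂ) -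
            (1 / (d : ℂ)) • S) +
        T ⊗ₖ (S - (1 / (d : ℂ)) • (1 : Matrix (Fin d × Fin d) (Fin d × Fin d) ℂ))))
    (hW : W = ((2 : ℂ) • T - 1) ⊗ₖ S) :
    ptrFirst (W * J) = (2 / ((d : ℂ) + 1)) •
      ((1 : Matrix (Fin d × Fin d) (Fin d × Fin d) ℂ) - (1 / (d : ℂ)) • S) := by
  have hdC : (d : ℂ) ≠ 0 := by
    have : d ≠ 0 := by omega
    exact_mod_cast this
  have hd1 : (d : ℂ) + 1 ≠ 0 := by
    intro h
    have : (d : ℂ) = -1 := by linear_combination h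
    have : (d : ℝ) = -1 := by exact_mod_cast congrArg Complex.re this
    have : (0:ℝ) ≤ (d:ℝ) := Nat.cast_nonneg d
    linarith
  have hdm1 : (d : ℂ) - 1 ≠ 0 := by
    intro h
    have : (d : ℂ) = 1 := by linear_combination h
    have : d = 1 := by exact_mod_cast this
    omega
  have hd2 : (d : ℂ) ^ 2 - 1 ≠ 0 := by
    intro h
    rcases mul_eq_zero.mp (show ((d:ℂ) - 1) * ((d:ℂ) + 1) = 0 by linear_combination h) with h' | h'
    · exact hdm1 h'
    · exact hd1 h'
  -- abbreviations
  set X : Matrix (Fin d × Fin d) (Fin d × Fin d) ℂ :=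
    (1 / (d : ℂ) ^ 2) • 1 - (1 / (d : ℂ)) • S with hX
  set Y : Matrix (Fin d × Fin d) (Fin d × Fin d) ℂ := S - (1 / (d : ℂ)) • 1 with hY
  have hWJ : W * J = (1 / ((d : ℂ) ^ 2 - 1)) •
      ((((2 : ℂ) • T - 1) * 1) ⊗ₖ (S * X) + (((2 : ℂ) • T - 1) * T) ⊗ₖ (S * Y)) := by
    rw [hJ, hW, Matrix.mul_smul, mul_add, ← Matrix.mul_kronecker_mul, ← Matrix.mul_kronecker_mul]
  have hTT : ((2 : ℂ) • T - 1) * T = T := by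
    rw [sub_mul, Matrix.smul_mul, hT, T_mul_T, Matrix.one_mul, two_smul]
    abel
  have hSX : S * X = (1 / (d : ℂ) ^ 2) • S - (1 / (d : ℂ)) • 1 := by
    rw [hX, Matrix.mul_sub, Matrix.mul_smul, Matrix.mul_smul, Matrix.mul_one, hS, S_mul_S]
  have hSY : S * Y = 1 - (1 / (d : ℂ)) • S := by
    rw [hY, Matrix.mul_sub, Matrix.mul_smul, Matrix.mul_one, hS, S_mul_S]
  rw [hWJ, hTT, Matrix.mul_one, ptrFirst_smul, ptrFirst_add, ptrFirst_kron, ptrFirst_kron,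
    hSX, hSY]
  have htr1 : ((2:ℂ) • T - 1).trace = 2 * (d : ℂ) - (d : ℂ) ^ 2 := by
    rw [Matrix.trace_sub, Matrix.trace_smul, hT, trace_T, Matrix.trace_one]
    simp
    ring
  rw [htr1, hT, trace_T]
  match_scalars
  · field_simp
    ring
  · field_simp
    ring
end

section
/- Let d ≥ 2 and define the d⁴×d⁴ matrix J₀ = (1/(d²−1)) ( 1 ⊗ (1 − (1/d) S) + T ⊗ (S − (1/d) 1) ), where the first Kronecker factor carries the output registers and the second the input registers. Then for every d²×d² complex matrix ρ with Tr(ρ) = 1, the partial trace over the second (input) tensor factor satisfies Tr₂ ( J₀ (1 ⊗ ρ^⊤) ) = (1/(d(d²−1))) ( (d − Tr(S ρ^⊤)) 1 + (d · Tr(S ρ^⊤) − 1) T ). -/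
open Matrix Kronecker

/-- The partial trace over the second tensor factor:
`(Tr₂ M)_{a,b} = Σ_c M_{(a,c),(b,c)}`. -/
noncomputable def ptrSecond {n m : Type*} [Fintype m]
    (M : Matrix (n × m) (n × m) ℂ) : Matrix n n ℂ :=
  Matrix.of fun a b => ∑ c : m, M (a, c) (b, c)

section PartialTrace

variable {n m : Type*} [Fintype m]

lemma ptrSecond_add (M N : Matrix (n × m) (n × m) ℂ) :
    ptrSecond (M + N) = ptrSecond M + ptrSecond N := by
  ext a b
  simp [ptrSecond, Finset.sum_add_distrib]

lemma ptrSecond_smul (c : ℂ) (M : Matrix (n × m) (n × m) ℂ) :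
    ptrSecond (c • M) = c • ptrSecond M := by
  ext a b
  simp [ptrSecond, Finset.mul_sum]

lemma ptrSecond_kronecker (X : Matrix n n ℂ) (Y : Matrix m m ℂ) :
    ptrSecond (X ⊗ₖ Y) = Y.trace • X := by
  ext a b
  simp [ptrSecond, Matrix.trace, Finset.sum_mul, mul_comm (X _ _)]

lemma ptrSecond_kronecker_mul_one_kronecker [Fintype n] [DecidableEq n] (X : Matrix n n ℂ)
    (Y R : Matrix m m ℂ) :
    ptrSecond ((X ⊗ₖ Y) * ((1 : Matrix n n ℂ) ⊗ₖ R)) = (Y * R).trace • X := by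
  rw [← mul_kronecker_mul, mul_one, ptrSecond_kronecker]

end PartialTrace

theorem output_of_averaged_channel_general (d : ℕ) (hd : 2 ≤ d)
    (S : Matrix (Fin d × Fin d) (Fin d × Fin d) ℂ)
    (T : Matrix (Fin d × Fin d) (Fin d × Fin d) ℂ)
    (J₀ : Matrix ((Fin d × Fin d) × (Fin d × Fin d)) ((Fin d × Fin d) × (Fin d × Fin d)) ℂ)
    (hJ₀ : J₀ = (1 / ((d : ℂ) ^ 2 - 1)) •
      ((1 : Matrix (Fin d × Fin d) (Fin d × Fin d) ℂ) ⊗ₖ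
          ((1 : Matrix (Fin d × Fin d) (Fin d × Fin d) ℂ) - (1 / (d : ℂ)) • S) +
        T ⊗ₖ (S - (1 / (d : ℂ)) • (1 : Matrix (Fin d × Fin d) (Fin d × Fin d) ℂ))))
    (ρ : Matrix (Fin d × Fin d) (Fin d × Fin d) ℂ) (hρ : ρ.trace = 1) :
    ptrSecond (J₀ * ((1 : Matrix (Fin d × Fin d) (Fin d × Fin d) ℂ) ⊗ₖ ρᵀ))
      = (1 / ((d : ℂ) * ((d : ℂ) ^ 2 - 1))) •
        ((((d : ℂ) - (S * ρᵀ).trace) • (1 : Matrix (Fin d × Fin d) (Fin d × Fin d) ℂ)) +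
          (((d : ℂ) * (S * ρᵀ).trace - 1) • T)) := by
  have hd0 : (d : ℂ) ≠ 0 := Nat.cast_ne_zero.mpr (by omega)
  rw [hJ₀, smul_mul_assoc, add_mul, ptrSecond_smul, ptrSecond_add,
    ptrSecond_kronecker_mul_one_kronecker, ptrSecond_kronecker_mul_one_kronecker]
  simp only [sub_mul, one_mul, smul_mul_assoc, trace_sub, trace_smul, trace_transpose, hρ,
    smul_eq_mul, mul_one]
  match_scalars <;> field_simp

/-- For `J₀ = (1/(d²−1)) (1 ⊗ (1 − (1/d)S) + T ⊗ (S − (1/d)1))`, the Choi matrix of the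
Haar-averaged doubled measurement channel, and any `ρ` of unit trace:
`Tr₂(J₀ (1 ⊗ ρᵀ)) = (1/(d(d²−1))) ((d − Tr(Sρᵀ)) 1 + (d Tr(Sρᵀ) − 1) T)`. -/
theorem output_of_averaged_channel (d : ℕ) (hd : 2 ≤ d)
    (S : Matrix (Fin d × Fin d) (Fin d × Fin d) ℂ) (hS : S = swapMatrix d)
    (T : Matrix (Fin d × Fin d) (Fin d × Fin d) ℂ) (hT : T = diagSwapMatrix d)
    (J₀ : Matrix ((Fin d × Fin d) × (Fin d × Fin d)) ((Fin d × Fin d) × (Fin d × Fin d)) ℂ)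
    (hJ₀ : J₀ = (1 / ((d : ℂ) ^ 2 - 1)) •
      ((1 : Matrix (Fin d × Fin d) (Fin d × Fin d) ℂ) ⊗ₖ
          ((1 : Matrix (Fin d × Fin d) (Fin d × Fin d) ℂ) - (1 / (d : ℂ)) • S) +
        T ⊗ₖ (S - (1 / (d : ℂ)) • (1 : Matrix (Fin d × Fin d) (Fin d × Fin d) ℂ))))
    (ρ : Matrix (Fin d × Fin d) (Fin d × Fin d) ℂ) (hρ : ρ.trace = 1) :
    ptrSecond (J₀ * ((1 : Matrix (Fin d × Fin d) (Fin d × Fin d) ℂ) ⊗ₖ ρᵀ))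
      = (1 / ((d : ℂ) * ((d : ℂ) ^ 2 - 1))) •
        ((((d : ℂ) - (S * ρᵀ).trace) • (1 : Matrix (Fin d × Fin d) (Fin d × Fin d) ℂ)) +
          (((d : ℂ) * (S * ρᵀ).trace - 1) • T)) :=
  output_of_averaged_channel_general d hd S T J₀ hJ₀ ρ hρ
end

section
/- Let d ≥ 2, let T be the d²×d² diagonal matrix with entries T_{(i,j),(k,l)} = δ_{ik}δ_{jl}δ_{ij}, and set Ω = 1 − T, ρ₀ = (1/(d(d−1))) (1 − T), ρ₁ = (1/d²) 1. Then Ω satisfies 0 ≤ Ω ≤ 1, ρ₀ and ρ₁ are positive semidefinite with unit trace, and Tr(Ω ρ₀) = 1 while Tr(Ω ρ₁) = 1 − 1/d. Hence the test accepting on Ω has type I error probability 1 − Tr(Ω ρ₀) = 0 and type II error probability Tr(Ω ρ₁) = 1 − 1/d. -/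
open Matrix
open scoped ComplexOrder

/-!
`T` is the orthogonal projection onto the span of the `d` basis vectors `|ii⟩`, so `Ω = 1 − T`
projects onto the span of the `d(d − 1)` vectors `|ij⟩` with `i ≠ j`. Both are positive
semidefinite, `Ω² = Ω`, and every trace in the statement is a multiple of `Tr Ω = d(d − 1)`:
`Tr ρ₀ = Tr(Ω ρ₀) = Tr Ω / (d(d − 1)) = 1` and `Tr(Ω ρ₁) = Tr Ω / d² = 1 − 1/d`.
-/

namespace Matrix

variable {ι : Type*} [DecidableEq ι]

def coordProj (R : Type*) [Zero R] [One R] (s : Finset ι) : Matrix ι ι R :=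
  diagonal fun i => if i ∈ s then 1 else 0

variable {R : Type*}

theorem coordProj_mul_self [Fintype ι] [Semiring R] (s : Finset ι) :
    coordProj R s * coordProj R s = coordProj R s := by
  rw [coordProj, diagonal_mul_diagonal]
  congr 1
  ext i
  split_ifs <;> simp

theorem trace_coordProj [Fintype ι] [Semiring R] (s : Finset ι) :
    (coordProj R s).trace = s.card := by
  rw [coordProj, trace_diagonal, Finset.sum_boole, Finset.filter_mem_eq_inter,
    Finset.univ_inter]

theorem one_sub_coordProj [Fintype ι] [Ring R] (s : Finset ι) :
    1 - coordProj R s = coordProj R sᶜ := by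
  rw [coordProj, coordProj, ← diagonal_one, diagonal_sub]
  congr 1
  ext i
  by_cases hi : i ∈ s <;> simp [hi]

theorem posSemidef_coordProj [Ring R] [PartialOrder R] [StarRing R] [StarOrderedRing R]
    (s : Finset ι) : (coordProj R s).PosSemidef :=
  posSemidef_diagonal_iff.mpr fun i => by
    split_ifs
    · exact zero_le_one
    · exact le_rfl

end Matrix

theorem diagSwapMatrix_eq_coordProj (d : ℕ) :
    diagSwapMatrix d = coordProj ℂ Finset.univ.diag := by
  ext ⟨i, j⟩ ⟨k, l⟩
  simp only [diagSwapMatrix, coordProj, of_apply, diagonal_apply, Finset.mem_diag,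
    Finset.mem_univ, true_and, Prod.mk.injEq]
  aesop

theorem card_compl_diag_univ (d : ℕ) :
    (((Finset.univ : Finset (Fin d)).diag)ᶜ.card : ℂ) = d * (d - 1) := by
  rw [Finset.card_compl, Finset.diag_card, Fintype.card_prod, Finset.card_univ, Fintype.card_fin,
    Nat.cast_sub (Nat.le_mul_self d)]
  push_cast
  ring

/-- With `Ω = 1 − T`, `ρ₀ = (1/(d(d−1)))(1 − T)` and `ρ₁ = (1/d²) 1`:
`0 ≤ Ω ≤ 1`, `ρ₀, ρ₁` are states, `Tr(Ω ρ₀) = 1` and `Tr(Ω ρ₁) = 1 − 1/d`, so the test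
accepting on `Ω` has type I error `1 − Tr(Ω ρ₀) = 0` and type II error
`Tr(Ω ρ₁) = 1 − 1/d`. -/
theorem asymmetric_discrimination_both_unknown (d : ℕ) (hd : 2 ≤ d)
    (T : Matrix (Fin d × Fin d) (Fin d × Fin d) ℂ) (hT : T = diagSwapMatrix d)
    (Ω ρ₀ ρ₁ : Matrix (Fin d × Fin d) (Fin d × Fin d) ℂ)
    (hΩ : Ω = (1 : Matrix (Fin d × Fin d) (Fin d × Fin d) ℂ) - T)
    (hρ₀ : ρ₀ = (1 / ((d : ℂ) * ((d : ℂ) - 1))) •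
      ((1 : Matrix (Fin d × Fin d) (Fin d × Fin d) ℂ) - T))
    (hρ₁ : ρ₁ = (1 / (d : ℂ) ^ 2) • (1 : Matrix (Fin d × Fin d) (Fin d × Fin d) ℂ)) :
    Ω.PosSemidef ∧ ((1 : Matrix (Fin d × Fin d) (Fin d × Fin d) ℂ) - Ω).PosSemidef ∧
    ρ₀.PosSemidef ∧ ρ₀.trace = 1 ∧
    ρ₁.PosSemidef ∧ ρ₁.trace = 1 ∧
    (Ω * ρ₀).trace = 1 ∧ (Ω * ρ₁).trace = 1 - 1 / (d : ℂ) ∧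
    1 - (Ω * ρ₀).trace = 0 ∧ (Ω * ρ₁).trace = 1 - 1 / (d : ℂ) := by
  have hT' : T = coordProj ℂ Finset.univ.diag := hT.trans (diagSwapMatrix_eq_coordProj d)
  have hΩ' : Ω = coordProj ℂ Finset.univ.diagᶜ := by rw [hΩ, hT', one_sub_coordProj]
  rw [← hΩ] at hρ₀
  have hd0 : (d : ℂ) ≠ 0 := by norm_cast; omega
  have hd1 : (d : ℂ) - 1 ≠ 0 := by
    rw [sub_ne_zero]; norm_cast; omega
  have htrΩ : Ω.trace = d * (d - 1) := by rw [hΩ', trace_coordProj, card_compl_diag_univ]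
  have hΩΩ : Ω * Ω = Ω := by rw [hΩ', coordProj_mul_self]
  have hc₀ : (0 : ℂ) ≤ 1 / (d * (d - 1)) := by
    have : (d : ℂ) * (d - 1) = ((d * (d - 1) : ℕ) : ℂ) := by
      rw [Nat.cast_mul, Nat.cast_sub (by omega)]; norm_num
    rw [this]
    exact one_div_nonneg.mpr (Nat.cast_nonneg _)
  have htr₀ : ρ₀.trace = 1 := by
    rw [hρ₀, trace_smul, htrΩ, smul_eq_mul]; field_simp
  have htrΩρ₀ : (Ω * ρ₀).trace = 1 := by rwa [hρ₀, Matrix.mul_smul, hΩΩ, ← hρ₀]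
  have htrΩρ₁ : (Ω * ρ₁).trace = 1 - 1 / d := by
    rw [hρ₁, Matrix.mul_smul, Matrix.mul_one, trace_smul, htrΩ, smul_eq_mul]; field_simp
  refine ⟨hΩ' ▸ posSemidef_coordProj _, ?_, ?_, htr₀, ?_, ?_, htrΩρ₀, htrΩρ₁,
    by rw [htrΩρ₀, sub_self], htrΩρ₁⟩
  · rw [hΩ, sub_sub_cancel, hT']; exact posSemidef_coordProj _
  · rw [hρ₀, hΩ']; exact (posSemidef_coordProj _).smul hc₀
  · rw [hρ₁]; exact PosSemidef.one.smul (one_div_nonneg.mpr (pow_nonneg (Nat.cast_nonneg _) 2))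
  · rw [hρ₁, trace_smul, trace_one, Fintype.card_prod, Fintype.card_fin, smul_eq_mul]
    push_cast
    field_simp
end

section
/- Let d ≥ 1 and let D be the d²×d² matrix D = Σ_{j=1}^{d} |j⟩⟨j| ⊗ |j⟩⟨j|. Then the partial trace over the first d-dimensional tensor factor of the entrywise absolute value |D − (1/d) 1| = √((D − (1/d)1)† (D − (1/d)1)) equals (2 − 2/d) 1_d, and hence its ℓ²→ℓ² operator norm equals 2 − 2/d. -/
open Matrix Kronecker
open scoped ComplexOrder

/-- The positive semidefinite square root of a positive semidefinite matrix
(the definition removed from Mathlib, restored with its old meaning). -/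
noncomputable def Matrix.PosSemidef.sqrt {n : Type*} [Fintype n] [DecidableEq n]
    {A : Matrix n n ℂ} (hA : A.PosSemidef) : Matrix n n ℂ :=
  hA.1.eigenvectorUnitary.1 * diagonal ((↑) ∘ (√·) ∘ hA.1.eigenvalues) *
    (star hA.1.eigenvectorUnitary : Matrix n n ℂ)

/-!
`D - (1/d) 1` is diagonal with entries `δ_{ca} - 1/d`, so its absolute value is the diagonal
matrix of the moduli `|δ_{ca} - 1/d|`. The partial trace of a diagonal matrix is diagonal with
entries the sums `Σ_c` over the first index, here `(1 - 1/d) + (d - 1) · (1/d) = 2 - 2/d`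
for every `a`. The operator norm of a scalar matrix is the modulus of the scalar.
-/

open scoped MatrixOrder in
theorem Matrix.PosSemidef.eq_sqrt_of_sq_eq {n : Type*} [Fintype n] [DecidableEq n]
    {A : Matrix n n ℂ} (hA : A.PosSemidef) {B : Matrix n n ℂ} (hB : B.PosSemidef)
    (hAB : A ^ 2 = B) : A = hB.sqrt := by
  have hsqrt_cfc : hB.sqrt = cfc Real.sqrt B := by
    rw [hB.1.cfc_eq, IsHermitian.cfc, Unitary.conjStarAlgAut_apply]; rfl
  have hunique : CFC.sqrt B = A := CFC.sqrt_unique (by rw [← hAB, sq]) hA.nonneg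
  rw [hsqrt_cfc, ← cfcₙ_eq_cfc (hf0 := Real.sqrt_zero), ← CFC.sqrt_eq_real_sqrt B hB.nonneg,
    hunique]

namespace Matrix

variable {n : Type*} [Fintype n] [DecidableEq n]

theorem sum_single_kronecker_single_eq_diagonal {α : Type*} [NonAssocSemiring α] :
    ∑ j : n, single j j (1 : α) ⊗ₖ single j j (1 : α) =
      diagonal fun p : n × n => if p.1 = p.2 then 1 else 0 := by
  rw [← sum_single_eq_diagonal, Fintype.sum_prod_type]
  refine Finset.sum_congr rfl fun a _ => ?_
  rw [single_kronecker_single, mul_one, Finset.sum_eq_single a] <;> simp +contextual [eq_comm]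

theorem sqrt_conjTranspose_mul_self_diagonal (m : n → ℂ) :
    (posSemidef_conjTranspose_mul_self (diagonal m)).sqrt = diagonal fun i => (‖m i‖ : ℂ) := by
  refine (PosSemidef.eq_sqrt_of_sq_eq (.diagonal fun i => ?_) _ ?_).symm
  · exact Complex.zero_le_real.mpr (norm_nonneg _)
  · rw [diagonal_conjTranspose, diagonal_mul_diagonal, sq, diagonal_mul_diagonal]
    congr 1
    funext i
    simp only [Pi.star_apply, Complex.star_def, Complex.conj_mul', sq]

theorem norm_toEuclideanCLM_smul_one [Nonempty n] (c : ℂ) :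
    ‖toEuclideanCLM (𝕜 := ℂ) (c • (1 : Matrix n n ℂ))‖ = ‖c‖ := by
  rw [map_smul, map_one, norm_smul, norm_one, mul_one]

end Matrix

theorem ptrFirst_diagonal {n m : Type*} [Fintype n] [DecidableEq n] [DecidableEq m]
    (f : n × m → ℂ) :
    ptrFirst (diagonal f) = diagonal fun a => ∑ c, f (c, a) := by
  ext a b
  by_cases h : a = b <;> simp [ptrFirst, diagonal_apply, h]

theorem sum_norm_ite_sub_inv_card {n : Type*} [Fintype n] [DecidableEq n] (a : n) :
    ∑ c : n, ‖(if c = a then (1 : ℂ) else 0) - (Fintype.card n : ℂ)⁻¹‖ =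
      2 - 2 / Fintype.card n := by
  have hcard : (1 : ℝ) ≤ Fintype.card n := by exact_mod_cast Fintype.card_pos_iff.mpr ⟨a⟩
  have hterm : ∀ c, ‖(if c = a then (1 : ℂ) else 0) - (Fintype.card n : ℂ)⁻¹‖ =
      (if c = a then 1 - 2 / (Fintype.card n : ℝ) else 0) + (Fintype.card n : ℝ)⁻¹ := by
    intro c
    split_ifs
    · rw [show (1 : ℂ) - (Fintype.card n : ℂ)⁻¹ = ((1 - (Fintype.card n : ℝ)⁻¹ : ℝ) : ℂ) by
          push_cast; rfl,
        Complex.norm_real, Real.norm_of_nonneg (sub_nonneg.mpr (inv_le_one_of_one_le₀ hcard))]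
      ring
    · simp
  rw [Finset.sum_congr rfl fun c _ => hterm c, Finset.sum_add_distrib, Finset.sum_ite_eq',
    Finset.sum_const, Finset.card_univ, nsmul_eq_mul, if_pos (Finset.mem_univ a),
    mul_inv_cancel₀ (by positivity)]
  ring

/-- For `D = Σ_j |j⟩⟨j| ⊗ |j⟩⟨j|`, the partial trace over the first factor of
`|D − (1/d) 1| = √((D − (1/d)1)†(D − (1/d)1))` equals `(2 − 2/d) 1_d`, and hence its
`ℓ² → ℓ²` operator norm equals `2 − 2/d`. -/
theorem ptrFirst_abs_choi_difference (d : ℕ) (hd : 1 ≤ d)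
    (D : Matrix (Fin d × Fin d) (Fin d × Fin d) ℂ)
    (hD : D = ∑ j : Fin d,
      (Matrix.single j j (1 : ℂ)) ⊗ₖ (Matrix.single j j (1 : ℂ)))
    (M : Matrix (Fin d × Fin d) (Fin d × Fin d) ℂ)
    (hM : M = D - (1 / (d : ℂ)) • (1 : Matrix (Fin d × Fin d) (Fin d × Fin d) ℂ)) :
    ptrFirst (Matrix.posSemidef_conjTranspose_mul_self M).sqrt
        = ((2 : ℂ) - 2 / (d : ℂ)) • (1 : Matrix (Fin d) (Fin d) ℂ) ∧
    ‖Matrix.toEuclideanCLM (𝕜 := ℂ)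
        (ptrFirst (Matrix.posSemidef_conjTranspose_mul_self M).sqrt)‖
        = 2 - 2 / (d : ℝ) := by
  have hM_diagonal : M = diagonal fun p : Fin d × Fin d =>
      (if p.1 = p.2 then 1 else 0) - (Fintype.card (Fin d) : ℂ)⁻¹ := by
    rw [hM, hD, sum_single_kronecker_single_eq_diagonal, smul_one_eq_diagonal, diagonal_sub,
      Fintype.card_fin, one_div]
  have hptr : ptrFirst (posSemidef_conjTranspose_mul_self M).sqrt
      = ((2 - 2 / d : ℝ) : ℂ) • (1 : Matrix (Fin d) (Fin d) ℂ) := by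
    rw [hM_diagonal, sqrt_conjTranspose_mul_self_diagonal, ptrFirst_diagonal,
      smul_one_eq_diagonal]
    congr 1
    funext a
    rw [← Complex.ofReal_sum, sum_norm_ite_sub_inv_card, Fintype.card_fin]
  have : Nonempty (Fin d) := ⟨⟨0, hd⟩⟩
  have hnonneg : (0 : ℝ) ≤ 2 - 2 / d :=
    sub_nonneg.mpr (div_le_self zero_le_two (by exact_mod_cast hd))
  refine ⟨by rw [hptr]; push_cast; rfl, ?_⟩
  rw [hptr, norm_toEuclideanCLM_smul_one, Complex.norm_real, Real.norm_of_nonneg hnonneg]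
end

section
/- Let d ≥ 1, let U be a d×d unitary matrix, and define the d²×d² matrices Ω = Σ_{i=1}^{d} |i⟩⟨i| ⊗ (U |i⟩⟨i| U†)^⊤, ρ₀ = (1/d) Σ_{i=1}^{d} |i⟩⟨i| ⊗ (U |i⟩⟨i| U†)^⊤, and ρ₁ = (1/d²) 1. Then Ω is an orthogonal projection (so 0 ≤ Ω ≤ 1), ρ₀ and ρ₁ are positive semidefinite with unit trace, and Tr(Ω ρ₀) = 1 while Tr(Ω ρ₁) = 1/d. Hence the test accepting on Ω has type I error probability 1 − Tr(Ω ρ₀) = 0 and type II error probability Tr(Ω ρ₁) = 1/d. -/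
/-!
`Ω` is block diagonal with diagonal blocks the rank-one projections `(U|i⟩⟨i|U†)ᵀ`, hence an
orthogonal projection of trace `d`. Since `ρ₀ = Ω / d`, `Tr(Ω ρ₀) = Tr Ω / d = 1`, while
`Tr(Ω ρ₁) = Tr Ω / d² = 1 / d`.
-/

open Matrix Kronecker
open scoped ComplexOrder

namespace IsStarProjection

theorem unitary_conj {R : Type*} [Monoid R] [StarMul R] {p U : R}
    (hp : IsStarProjection p) (hU : U ∈ unitary R) : IsStarProjection (U * p * star U) where
  isIdempotentElem := by
    rw [IsIdempotentElem, show U * p * star U * (U * p * star U) = U * p * (star U * U) * p * star U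
      by simp only [mul_assoc], Unitary.star_mul_self_of_mem hU, mul_one, mul_assoc U p p,
      hp.isIdempotentElem.eq]
  isSelfAdjoint := by
    rw [IsSelfAdjoint, star_mul, star_mul, star_star, hp.isSelfAdjoint.star_eq, mul_assoc]

theorem finset_sum {R ι : Type*} [NonUnitalSemiring R] [StarRing R] (s : Finset ι)
    {p : ι → R} (hp : ∀ i ∈ s, IsStarProjection (p i))
    (horth : ∀ i ∈ s, ∀ j ∈ s, i ≠ j → p i * p j = 0) :
    IsStarProjection (∑ i ∈ s, p i) := by
  classical
  induction s using Finset.induction_on with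
  | empty => simp [IsStarProjection.zero R]
  | insert a s has ih =>
    have ha := s.mem_insert_self a
    have hs : ∀ i ∈ s, i ∈ insert a s := fun i => Finset.mem_insert_of_mem
    rw [Finset.sum_insert has]
    refine (hp a ha).add (ih (fun i hi => hp i (hs i hi))
      fun i hi j hj => horth i (hs i hi) j (hs j hj)) ?_
    rw [Finset.mul_sum]
    exact Finset.sum_eq_zero fun j hj => horth a ha j (hs j hj) (ne_of_mem_of_not_mem hj has).symm

variable {n m R : Type*} [Fintype n] [Fintype m] [CommSemiring R] [StarRing R]

theorem transpose {A : Matrix n n R} (hA : IsStarProjection A) : IsStarProjection Aᵀ where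
  isIdempotentElem := by rw [IsIdempotentElem, ← transpose_mul, hA.isIdempotentElem.eq]
  isSelfAdjoint := by
    rw [IsSelfAdjoint, star_eq_conjTranspose, conjTranspose_transpose_eq_transpose_conjTranspose,
      ← star_eq_conjTranspose, hA.isSelfAdjoint.star_eq]

theorem kronecker {A : Matrix n n R} {B : Matrix m m R}
    (hA : IsStarProjection A) (hB : IsStarProjection B) : IsStarProjection (A ⊗ₖ B) where
  isIdempotentElem := by
    rw [IsIdempotentElem, ← mul_kronecker_mul, hA.isIdempotentElem.eq, hB.isIdempotentElem.eq]
  isSelfAdjoint := by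
    rw [IsSelfAdjoint, star_eq_conjTranspose, conjTranspose_kronecker, ← star_eq_conjTranspose,
      ← star_eq_conjTranspose, hA.isSelfAdjoint.star_eq, hB.isSelfAdjoint.star_eq]

open scoped MatrixOrder in
theorem posSemidef {𝕜 : Type*} [RCLike 𝕜] {P : Matrix n n 𝕜} (hP : IsStarProjection P) :
    P.PosSemidef :=
  hP.nonneg.posSemidef

end IsStarProjection

namespace Matrix

variable {m ι R : Type*} [Fintype m] [Fintype ι] [DecidableEq ι] [CommSemiring R]

theorem isStarProjection_single_one [StarRing R] (i : ι) :
    IsStarProjection (single i i (1 : R)) where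
  isIdempotentElem := by rw [IsIdempotentElem, single_mul_single_same, one_mul]
  isSelfAdjoint := by rw [IsSelfAdjoint, star_eq_conjTranspose, conjTranspose_single, star_one]

theorem isStarProjection_sum_single_kronecker [StarRing R] {B : ι → Matrix m m R}
    (hB : ∀ i, IsStarProjection (B i)) :
    IsStarProjection (∑ i, single i i (1 : R) ⊗ₖ B i) :=
  IsStarProjection.finset_sum _ (fun i _ => (isStarProjection_single_one i).kronecker (hB i))
    fun i _ j _ hij => by
      rw [← mul_kronecker_mul, single_mul_single_of_ne 1 i i j hij, zero_kronecker]

theorem trace_sum_single_kronecker (B : ι → Matrix m m R) :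
    trace (∑ i, single i i (1 : R) ⊗ₖ B i) = ∑ i, trace (B i) := by
  simp only [trace_sum, trace_kronecker, trace_single_eq_same, one_mul]

end Matrix

/-- For a known von Neumann measurement `𝒫_U` tested against an unknown Haar-random one
using half of the maximally entangled state: with
`Ω = Σ_i |i⟩⟨i| ⊗ (U|i⟩⟨i|U†)ᵀ`, `ρ₀ = (1/d) Σ_i |i⟩⟨i| ⊗ (U|i⟩⟨i|U†)ᵀ` and
`ρ₁ = (1/d²) 1`, the effect `Ω` is an orthogonal projection (so `0 ≤ Ω ≤ 1`), `ρ₀, ρ₁`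
are states, and `Tr(Ω ρ₀) = 1`, `Tr(Ω ρ₁) = 1/d`; hence the test accepting on `Ω` has
type I error `1 − Tr(Ω ρ₀) = 0` and type II error `Tr(Ω ρ₁) = 1/d`. -/
theorem asymmetric_discrimination_one_fixed (d : ℕ) (hd : 1 ≤ d)
    (U : Matrix (Fin d) (Fin d) ℂ) (hU : U ∈ Matrix.unitaryGroup (Fin d) ℂ)
    (Ω ρ₀ ρ₁ : Matrix (Fin d × Fin d) (Fin d × Fin d) ℂ)
    (hΩ : Ω = ∑ i : Fin d,
      (Matrix.single i i (1 : ℂ)) ⊗ₖ (U * Matrix.single i i (1 : ℂ) * Uᴴ)ᵀ)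
    (hρ₀ : ρ₀ = (1 / (d : ℂ)) • ∑ i : Fin d,
      (Matrix.single i i (1 : ℂ)) ⊗ₖ (U * Matrix.single i i (1 : ℂ) * Uᴴ)ᵀ)
    (hρ₁ : ρ₁ = (1 / (d : ℂ) ^ 2) • (1 : Matrix (Fin d × Fin d) (Fin d × Fin d) ℂ)) :
    Ω.IsHermitian ∧ Ω * Ω = Ω ∧
    Ω.PosSemidef ∧ ((1 : Matrix (Fin d × Fin d) (Fin d × Fin d) ℂ) - Ω).PosSemidef ∧
    ρ₀.PosSemidef ∧ ρ₀.trace = 1 ∧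
    ρ₁.PosSemidef ∧ ρ₁.trace = 1 ∧
    (Ω * ρ₀).trace = 1 ∧ (Ω * ρ₁).trace = 1 / (d : ℂ) ∧
    1 - (Ω * ρ₀).trace = 0 := by
  have hd₀ : (d : ℂ) ≠ 0 := Nat.cast_ne_zero.mpr (by omega)
  have hΩproj : IsStarProjection Ω := hΩ ▸ isStarProjection_sum_single_kronecker fun i =>
    ((isStarProjection_single_one i).unitary_conj hU).transpose
  have hΩtrace : Ω.trace = d := by
    rw [hΩ, trace_sum_single_kronecker]
    simp_rw [trace_transpose, trace_mul_cycle U, ← star_eq_conjTranspose,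
      Unitary.star_mul_self_of_mem hU, one_mul, trace_single_eq_same]
    simp
  have hρ₀Ω : ρ₀ = (1 / (d : ℂ)) • Ω := by rw [hρ₀, hΩ]
  have hΩρ₀ : (Ω * ρ₀).trace = 1 := by
    rw [hρ₀Ω, Matrix.mul_smul, hΩproj.isIdempotentElem.eq, trace_smul, hΩtrace, smul_eq_mul,
      one_div_mul_cancel hd₀]
  refine ⟨hΩproj.isSelfAdjoint, hΩproj.isIdempotentElem.eq, hΩproj.posSemidef,
    hΩproj.one_sub.posSemidef, ?_, ?_, ?_, ?_, hΩρ₀, ?_, by rw [hΩρ₀, sub_self]⟩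
  · rw [hρ₀Ω]
    exact hΩproj.posSemidef.smul (by positivity)
  · rw [hρ₀Ω, trace_smul, hΩtrace, smul_eq_mul, one_div_mul_cancel hd₀]
  · rw [hρ₁]
    exact PosSemidef.one.smul (by positivity)
  · rw [hρ₁, trace_smul, trace_one, Fintype.card_prod, Fintype.card_fin, smul_eq_mul]
    push_cast
    field_simp
  · rw [hρ₁, Matrix.mul_smul, mul_one, trace_smul, hΩtrace, smul_eq_mul]
    field_simp
end
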